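/- Let λ = μ + iν be a complex number with ν > 0, and set α = √((|λ| + μ)/2) and β = ν/√(2(|λ| + μ)). Let σ₂ = [[0, −i],[i, 0]] and let N̄ be the 4×4 complex matrix N̄ = [[α·I₂, −β·σ₂],[β·σ₂, α·I₂]]. Then N̄ is doubled-up and N̄^♭·N̄ = [[μ·I₂, −ν·σ₂],[ν·σ₂, μ·I₂]]. Moreover, for λ > 0 real, the matrix diag(√λ, √λ) = [[√λ, 0],[0, √λ]] satisfies ([[√λ, 0],[0, √λ]])^♭·[[√λ, 0],[0, √λ]] = λ·I₂, and for λ < 0 real, the matrix [[0, √|λ|],[√|λ|, 0]] satisfies ([[0, √|λ|],[√|λ|, 0]])^♭·[[0, √|λ|],[√|λ|, 0]] = λ·I₂. -/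

import Mathlib

/-!
Since `σ₂ᴴ = σ₂`, `σ₂² = 1` and `σ₂^# = -σ₂`, the blocks `[[a I, -b σ₂],[b σ₂, a I]]` form a copy of
`ℂ ∋ a + i b` inside the doubled-up matrices, on which `♭` is the identity. Hence `N̄^♭ N̄ = N̄²` is
the block of `(α + iβ)²`, and `α + iβ` is the principal square root of `λ`. In the real cases
`√λ I` is fixed by `♭`, while `♭` negates `Σ` because `J Σ J = -Σ`, so
`(√|λ| Σ)^♭ (√|λ| Σ) = -|λ| Σ² = λ I`.
-/

open Matrix

noncomputable section

/-- The Krein-space metric `J_{2k} = diag(I_k, -I_k)`. -/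
def Jmat (k : ℕ) : Matrix (Fin k ⊕ Fin k) (Fin k ⊕ Fin k) ℂ :=
  Matrix.fromBlocks 1 0 0 (-1)

/-- The block-swap matrix `Σ_{2k} = [[0, I_k],[I_k, 0]]`. -/
def Sig (k : ℕ) : Matrix (Fin k ⊕ Fin k) (Fin k ⊕ Fin k) ℂ :=
  Matrix.fromBlocks 0 1 1 0

/-- A `2r × 2s` complex matrix is doubled-up if `Σ_{2r} X Σ_{2s} = X^#`. -/
def DoubledUp {r s : ℕ} (X : Matrix (Fin r ⊕ Fin r) (Fin s ⊕ Fin s) ℂ) : Prop :=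
  Sig r * X * Sig s = X.map (starRingEnd ℂ)

/-- The ♭-adjoint `X^♭ = J_{2s} X† J_{2r}` of a `2r × 2s` complex matrix. -/
def flatAdj {r s : ℕ} (X : Matrix (Fin r ⊕ Fin r) (Fin s ⊕ Fin s) ℂ) :
    Matrix (Fin s ⊕ Fin s) (Fin r ⊕ Fin r) ℂ :=
  Jmat s * Xᴴ * Jmat r

/-- A `2k × 2k` complex matrix is Bogoliubov if it is doubled-up and ♭-unitary. -/
def Bogoliubov {k : ℕ} (R : Matrix (Fin k ⊕ Fin k) (Fin k ⊕ Fin k) ℂ) : Prop :=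
  DoubledUp R ∧ R * flatAdj R = 1 ∧ flatAdj R * R = 1

/-- The Pauli matrix `σ₂`. -/
def sigma2 : Matrix (Fin 2) (Fin 2) ℂ := !![0, -Complex.I; Complex.I, 0]

namespace Complex

theorem sq_mk_sqrt_half_add_norm {z : ℂ} (hz : 0 < ‖z‖ + z.re) :
    (⟨√((‖z‖ + z.re) / 2), z.im / √(2 * (‖z‖ + z.re))⟩ : ℂ) ^ 2 = z := by
  generalize hs : ‖z‖ + z.re = s at hz ⊢
  have hs_double : √(2 * s) = 2 * √(s / 2) := by
    rw [show 2 * s = 2 ^ 2 * (s / 2) by ring, Real.sqrt_mul (by positivity),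
      Real.sqrt_sq zero_le_two]
  have ha : √(s / 2) ^ 2 = s / 2 := Real.sq_sqrt (by positivity)
  have ha0 : √(s / 2) ≠ 0 := by positivity
  rw [hs_double]
  generalize √(s / 2) = a at ha ha0
  have hnorm : ‖z‖ ^ 2 = z.re ^ 2 + z.im ^ 2 := by
    rw [Complex.sq_norm, Complex.normSq_apply]; ring
  apply Complex.ext
  · simp only [sq, Complex.mul_re]
    field_simp
    linear_combination (4 * (a ^ 2 + s / 2) - 4 * z.re) * ha + hnorm - (s - z.re + ‖z‖) * hs
  · simp only [sq, Complex.mul_im]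
    field_simp
    ring

end Complex

variable {k r s : ℕ}

theorem Jmat_mul_Jmat : Jmat k * Jmat k = 1 := by
  simp [Jmat, fromBlocks_multiply, ← fromBlocks_one]

theorem Jmat_mul_Sig_mul_Jmat : Jmat k * Sig k * Jmat k = -Sig k := by
  simp [Jmat, Sig, fromBlocks_multiply, fromBlocks_neg]

theorem Sig_mul_Sig : Sig k * Sig k = 1 := by
  simp [Sig, fromBlocks_multiply, ← fromBlocks_one]

theorem flatAdj_fromBlocks (A B C D : Matrix (Fin r) (Fin s) ℂ) :
    flatAdj (fromBlocks A B C D) = fromBlocks Aᴴ (-Cᴴ) (-Bᴴ) Dᴴ := by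
  simp [flatAdj, Jmat, fromBlocks_conjTranspose, fromBlocks_multiply]

theorem flatAdj_ofReal_smul (c : ℝ) (X : Matrix (Fin r ⊕ Fin r) (Fin s ⊕ Fin s) ℂ) :
    flatAdj ((c : ℂ) • X) = (c : ℂ) • flatAdj X := by
  simp [flatAdj, conjTranspose_smul]

theorem flatAdj_one : flatAdj (1 : Matrix (Fin k ⊕ Fin k) (Fin k ⊕ Fin k) ℂ) = 1 := by
  simp [flatAdj, Jmat_mul_Jmat]

theorem flatAdj_Sig : flatAdj (Sig k) = -Sig k := by
  rw [flatAdj, show (Sig k)ᴴ = Sig k by simp [Sig, fromBlocks_conjTranspose],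
    Jmat_mul_Sig_mul_Jmat]

theorem doubledUp_fromBlocks (A B : Matrix (Fin r) (Fin s) ℂ) :
    DoubledUp (fromBlocks A B (B.map (starRingEnd ℂ)) (A.map (starRingEnd ℂ))) := by
  simp [DoubledUp, Sig, fromBlocks_multiply, fromBlocks_map, Matrix.map_map, Function.comp_def]

theorem flatAdj_sqrt_smul_one_mul_self {t : ℝ} (ht : 0 ≤ t) :
    flatAdj ((√t : ℂ) • (1 : Matrix (Fin k ⊕ Fin k) (Fin k ⊕ Fin k) ℂ)) *
      ((√t : ℂ) • (1 : Matrix (Fin k ⊕ Fin k) (Fin k ⊕ Fin k) ℂ)) = (t : ℂ) • 1 := by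
  rw [flatAdj_ofReal_smul, flatAdj_one, smul_mul_smul, mul_one, ← Complex.ofReal_mul,
    Real.mul_self_sqrt ht]

theorem flatAdj_sqrt_abs_smul_Sig_mul_self {t : ℝ} (ht : t ≤ 0) :
    flatAdj ((√|t| : ℂ) • Sig k) * ((√|t| : ℂ) • Sig k) = (t : ℂ) • 1 := by
  rw [flatAdj_ofReal_smul, flatAdj_Sig, smul_mul_smul, neg_mul, Sig_mul_Sig,
    ← Complex.ofReal_mul, Real.mul_self_sqrt (abs_nonneg t), abs_of_nonpos ht, smul_neg,
    ← neg_smul, ← Complex.ofReal_neg, neg_neg]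

def couplingBlock (S : Matrix (Fin k) (Fin k) ℂ) (z : ℂ) :
    Matrix (Fin k ⊕ Fin k) (Fin k ⊕ Fin k) ℂ :=
  fromBlocks ((z.re : ℂ) • 1) ((-(z.im : ℂ)) • S) ((z.im : ℂ) • S) ((z.re : ℂ) • 1)

section couplingBlock

variable {S : Matrix (Fin k) (Fin k) ℂ}

theorem doubledUp_couplingBlock (hS : S.map (starRingEnd ℂ) = -S) (z : ℂ) :
    DoubledUp (couplingBlock S z) := by
  convert doubledUp_fromBlocks ((z.re : ℂ) • (1 : Matrix (Fin k) (Fin k) ℂ)) ((-(z.im : ℂ)) • S)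
    using 2
  rw [Matrix.map_smul' _ _ _ (map_mul _), Matrix.map_smul' _ _ _ (map_mul _), hS,
    Matrix.map_one _ (map_zero _) (map_one _)]
  simp [couplingBlock]

theorem flatAdj_couplingBlock (hS : Sᴴ = S) (z : ℂ) :
    flatAdj (couplingBlock S z) = couplingBlock S z := by
  simp [couplingBlock, flatAdj_fromBlocks, conjTranspose_smul, hS]

theorem couplingBlock_mul_couplingBlock (hS : S * S = 1) (z w : ℂ) :
    couplingBlock S z * couplingBlock S w = couplingBlock S (z * w) := by
  simp only [couplingBlock, fromBlocks_multiply, smul_mul_smul, mul_one, one_mul, hS,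
    Complex.mul_re, Complex.mul_im]
  congr 1 <;> simp only [← add_smul] <;> congr 1 <;> push_cast <;> ring

end couplingBlock

theorem sigma2_conjTranspose : sigma2ᴴ = sigma2 := by
  ext i j; fin_cases i <;> fin_cases j <;> simp [sigma2, conjTranspose_apply]

theorem sigma2_mul_sigma2 : sigma2 * sigma2 = 1 := by
  ext i j; fin_cases i <;> fin_cases j <;> simp [sigma2, mul_apply]

theorem sigma2_map_conj : sigma2.map (starRingEnd ℂ) = -sigma2 := by
  ext i j; fin_cases i <;> fin_cases j <;> simp [sigma2]

/-- The canonical coupling blocks of the doubled-up SVD: for a non-real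
eigenvalue `λ = μ + iν` (`ν > 0`), the doubled-up matrix
`N̄ = [[αI₂, −βσ₂],[βσ₂, αI₂]]` satisfies `N̄^♭N̄ = [[μI₂, −νσ₂],[νσ₂, μI₂]]`;
for real `λ > 0`, `diag(√λ, √λ)` satisfies `(·)^♭(·) = λI₂`; for real
`λ < 0`, `[[0, √|λ|],[√|λ|, 0]]` satisfies `(·)^♭(·) = λI₂`. -/
theorem canonical_coupling_blocks (μ ν : ℝ) (hν : 0 < ν) (lam : ℂ)
    (hlam : lam = Complex.mk μ ν) (α β : ℝ)
    (hα : α = Real.sqrt ((‖lam‖ + μ) / 2))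
    (hβ : β = ν / Real.sqrt (2 * (‖lam‖ + μ))) :
    (DoubledUp (Matrix.fromBlocks ((α : ℂ) • (1 : Matrix (Fin 2) (Fin 2) ℂ))
        ((-(β : ℂ)) • sigma2) ((β : ℂ) • sigma2)
        ((α : ℂ) • (1 : Matrix (Fin 2) (Fin 2) ℂ))) ∧
      flatAdj (Matrix.fromBlocks ((α : ℂ) • (1 : Matrix (Fin 2) (Fin 2) ℂ))
            ((-(β : ℂ)) • sigma2) ((β : ℂ) • sigma2)
            ((α : ℂ) • (1 : Matrix (Fin 2) (Fin 2) ℂ)))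
          * Matrix.fromBlocks ((α : ℂ) • (1 : Matrix (Fin 2) (Fin 2) ℂ))
            ((-(β : ℂ)) • sigma2) ((β : ℂ) • sigma2)
            ((α : ℂ) • (1 : Matrix (Fin 2) (Fin 2) ℂ))
        = Matrix.fromBlocks ((μ : ℂ) • (1 : Matrix (Fin 2) (Fin 2) ℂ))
            ((-(ν : ℂ)) • sigma2) ((ν : ℂ) • sigma2)
            ((μ : ℂ) • (1 : Matrix (Fin 2) (Fin 2) ℂ))) ∧
    (∀ t : ℝ, 0 < t →
      flatAdj (Matrix.fromBlocks
            ((Real.sqrt t : ℂ) • (1 : Matrix (Fin 1) (Fin 1) ℂ)) 0 0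
            ((Real.sqrt t : ℂ) • (1 : Matrix (Fin 1) (Fin 1) ℂ)))
          * Matrix.fromBlocks
            ((Real.sqrt t : ℂ) • (1 : Matrix (Fin 1) (Fin 1) ℂ)) 0 0
            ((Real.sqrt t : ℂ) • (1 : Matrix (Fin 1) (Fin 1) ℂ))
        = (t : ℂ) • (1 : Matrix (Fin 1 ⊕ Fin 1) (Fin 1 ⊕ Fin 1) ℂ)) ∧
    (∀ t : ℝ, t < 0 →
      flatAdj (Matrix.fromBlocks 0
            ((Real.sqrt |t| : ℂ) • (1 : Matrix (Fin 1) (Fin 1) ℂ))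
            ((Real.sqrt |t| : ℂ) • (1 : Matrix (Fin 1) (Fin 1) ℂ)) 0)
          * Matrix.fromBlocks 0
            ((Real.sqrt |t| : ℂ) • (1 : Matrix (Fin 1) (Fin 1) ℂ))
            ((Real.sqrt |t| : ℂ) • (1 : Matrix (Fin 1) (Fin 1) ℂ)) 0
        = (t : ℂ) • (1 : Matrix (Fin 1 ⊕ Fin 1) (Fin 1 ⊕ Fin 1) ℂ)) := by
  subst hlam
  have hpos : 0 < ‖(⟨μ, ν⟩ : ℂ)‖ + μ := by
    have hre : |μ| < ‖(⟨μ, ν⟩ : ℂ)‖ := Complex.abs_re_lt_norm (z := ⟨μ, ν⟩) |>.2 hν.ne'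
    linarith [neg_lt_of_abs_lt hre]
  have hsqrt : (⟨α, β⟩ : ℂ) ^ 2 = ⟨μ, ν⟩ := by
    subst hα hβ
    exact Complex.sq_mk_sqrt_half_add_norm hpos
  refine ⟨⟨doubledUp_couplingBlock sigma2_map_conj ⟨α, β⟩, ?_⟩, fun t ht => ?_, fun t ht => ?_⟩
  · change flatAdj (couplingBlock sigma2 ⟨α, β⟩) * couplingBlock sigma2 ⟨α, β⟩ =
      couplingBlock sigma2 ⟨μ, ν⟩
    rw [flatAdj_couplingBlock sigma2_conjTranspose,
      couplingBlock_mul_couplingBlock sigma2_mul_sigma2, ← sq, hsqrt]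
  · have hscalar : fromBlocks ((√t : ℂ) • (1 : Matrix (Fin 1) (Fin 1) ℂ)) 0 0
        ((√t : ℂ) • 1) = (√t : ℂ) • (1 : Matrix (Fin 1 ⊕ Fin 1) (Fin 1 ⊕ Fin 1) ℂ) := by
      simp [← fromBlocks_one, fromBlocks_smul]
    rw [hscalar]
    exact flatAdj_sqrt_smul_one_mul_self ht.le
  · have hswap : fromBlocks 0 ((√|t| : ℂ) • (1 : Matrix (Fin 1) (Fin 1) ℂ))
        ((√|t| : ℂ) • 1) 0 = (√|t| : ℂ) • Sig 1 := by
      simp [Sig, fromBlocks_smul]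
    rw [hswap]
    exact flatAdj_sqrt_abs_smul_Sig_mul_self ht.le
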